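/- (Theorem 4.2, abstract form.) In a mixed Galerkin setup satisfying the discrete Poincaré inequality with constant C_P > 0, let κ₁, κ₂ : Ω → ℝ be measurable coefficients bounded below by positive constants a.e., let f₂ ∈ L²(Ω), and let (u₁,p₁), (u₂,p₂) ∈ V × Q be mixed Galerkin solutions for (κ₁,f₂) and (κ₂,f₂) respectively, with respect to the same spaces V, Q. Then ‖κ₂^{-1/2} u₂ − κ₁^{-1/2} u₁‖_{L²(Ω;ℝᵈ)} ≤ C_P ‖κ₂^{-1/2} − κ₁^{-1/2}‖_{L^∞(Ω)} ‖f₂‖_{L²(Ω)}. (Applied with V = V_f, Q = Q_f this bounds the term e₁, and with V = V_ms, Q = Q_ms it bounds the term e₅.) -/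

import Mathlib

open MeasureTheory RealInnerProductSpace

noncomputable section

/-- A mixed Galerkin setup: a velocity subspace `V ⊆ L²(Ω;ℝᵈ)`, a pressure subspace
`Q ⊆ L²(Ω)`, and a linear discrete divergence `D : V → L²(Ω)` with range contained in `Q`. -/
structure MixedGalerkinSetup {Ω : Type*} [MeasurableSpace Ω] (μ : Measure Ω) (d : ℕ) where
  V : Submodule ℝ (Lp (EuclideanSpace ℝ (Fin d)) 2 μ)
  Q : Submodule ℝ (Lp ℝ 2 μ)
  D : V →ₗ[ℝ] Lp ℝ 2 μ
  D_mem_Q : ∀ v : V, D v ∈ Q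

/-- `(u, p) ∈ V × Q` is a mixed Galerkin solution for the coefficient `κ` and source `f`:
`∫ κ⁻¹ u·v − ∫ (Dv) p = 0` for all `v ∈ V` and `∫ (Du) q = ∫ f q` for all `q ∈ Q`. -/
def IsMGSolution {Ω : Type*} [MeasurableSpace Ω] {μ : Measure Ω} {d : ℕ}
    (S : MixedGalerkinSetup μ d) (κ : Ω → ℝ) (f : Lp ℝ 2 μ)
    (u : S.V) (p : S.Q) : Prop :=
  (∀ v : S.V,
      ∫ x, (κ x)⁻¹ * ⟪(u : Lp (EuclideanSpace ℝ (Fin d)) 2 μ) x,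
          (v : Lp (EuclideanSpace ℝ (Fin d)) 2 μ) x⟫ ∂μ
        - ∫ x, (S.D v) x * (p : Lp ℝ 2 μ) x ∂μ = 0) ∧
  (∀ q : S.Q, ∫ x, (S.D u) x * (q : Lp ℝ 2 μ) x ∂μ = ∫ x, f x * (q : Lp ℝ 2 μ) x ∂μ)

/-!
Testing the second Galerkin equation with `q = D u ∈ Q` gives `‖D u‖ ≤ ‖f‖`, hence
`‖u‖ ≤ C_P ‖f‖` by the Poincaré inequality. Both solutions share `f` and `Q`, so `D (u₂ - u₁)` is
orthogonal to `Q`; testing the first equations with `w = u₂ - u₁` then gives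
`∫ κ₂⁻¹ u₂·w = ∫ κ₁⁻¹ u₁·w`. With `a = κ₁^{-1/2}` and `b = κ₂^{-1/2}`, the pointwise identity
`|b u₂ - a u₁|² = b² u₂·w - a² u₁·w + (b - a)² u₁·u₂` turns this into
`∫ |b u₂ - a u₁|² = ∫ (b - a)² u₁·u₂ ≤ ‖b - a‖²_∞ ‖u₁‖ ‖u₂‖ ≤ (C_P ‖b - a‖_∞ ‖f‖)²`.
-/

section

variable {Ω : Type*} [MeasurableSpace Ω] {μ : Measure Ω}

theorem MeasureTheory.L2.real_inner_eq_integral_mul (f g : Lp ℝ 2 μ) :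
    ⟪f, g⟫ = ∫ x, f x * g x ∂μ := by
  simp only [L2.inner_def, RCLike.inner_apply, conj_trivial, mul_comm]

theorem MeasureTheory.MemLp.ae_norm_le_toReal_eLpNorm_top {F : Type*} [NormedAddCommGroup F]
    {f : Ω → F} (hf : MemLp f ⊤ μ) : ∀ᵐ x ∂μ, ‖f x‖ ≤ (eLpNorm f ⊤ μ).toReal := by
  filter_upwards [enorm_ae_le_eLpNormEssSup f μ] with x hx
  rw [← toReal_enorm (f x), eLpNorm_exponent_top]
  have hfin : eLpNormEssSup f μ ≠ ⊤ := by
    simpa only [eLpNorm_exponent_top] using hf.eLpNorm_ne_top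
  exact ENNReal.toReal_mono hfin hx

variable {E : Type*} [NormedAddCommGroup E]

theorem MeasureTheory.Lp.integral_norm_mul_norm_le (F G : Lp E 2 μ) :
    ∫ x, ‖F x‖ * ‖G x‖ ∂μ ≤ ‖F‖ * ‖G‖ := by
  have hF : MemLp (fun x => ‖F x‖) 2 μ := (Lp.memLp F).norm
  have hG : MemLp (fun x => ‖G x‖) 2 μ := (Lp.memLp G).norm
  calc ∫ x, ‖F x‖ * ‖G x‖ ∂μ = ⟪hF.toLp _, hG.toLp _⟫ := by
        rw [L2.real_inner_eq_integral_mul]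
        refine integral_congr_ae ?_
        filter_upwards [hF.coeFn_toLp, hG.coeFn_toLp] with x hFx hGx
        rw [hFx, hGx]
    _ ≤ ‖hF.toLp _‖ * ‖hG.toLp _‖ := real_inner_le_norm _ _
    _ = ‖F‖ * ‖G‖ := by rw [Lp.norm_toLp, Lp.norm_toLp, eLpNorm_norm, eLpNorm_norm, Lp.norm_def, Lp.norm_def]

variable [InnerProductSpace ℝ E]

theorem norm_smul_sub_smul_sq_eq (a b : ℝ) (x y : E) :
    ‖b • y - a • x‖ ^ 2 = b ^ 2 * ⟪y, y - x⟫ - a ^ 2 * ⟪x, y - x⟫ + (b - a) ^ 2 * ⟪x, y⟫ := by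
  rw [← real_inner_self_eq_norm_sq]
  simp only [inner_sub_left, inner_sub_right, real_inner_smul_left, real_inner_smul_right,
    real_inner_comm x y]
  ring

theorem norm_le_norm_of_forall_inner_eq (K : Submodule ℝ E) {v f : E} (hv : v ∈ K)
    (h : ∀ q ∈ K, ⟪v, q⟫ = ⟪f, q⟫) : ‖v‖ ≤ ‖f‖ := by
  have hvv := h v hv
  rw [real_inner_self_eq_norm_sq] at hvv
  nlinarith [norm_nonneg v, norm_nonneg f, real_inner_le_norm f v]

theorem MeasureTheory.MemLp.integrable_sq_mul_inner {c : Ω → ℝ} (hc : MemLp c ⊤ μ)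
    {F G : Ω → E} (hF : MemLp F 2 μ) (hG : MemLp G 2 μ) :
    Integrable (fun x => c x ^ 2 * ⟪F x, G x⟫) μ := by
  have hFG : Integrable (fun x => ⟪F x, G x⟫) μ := by
    refine (hF.norm.integrable_mul hG.norm).mono (hF.1.inner hG.1) (ae_of_all _ fun x => ?_)
    simpa using abs_real_inner_le_norm (F x) (G x)
  refine hFG.bdd_mul (hc.1.pow 2) (c := (eLpNorm c ⊤ μ).toReal ^ 2) ?_
  filter_upwards [hc.ae_norm_le_toReal_eLpNorm_top] with x hx
  rw [norm_pow]
  exact pow_le_pow_left₀ (norm_nonneg _) hx 2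

theorem integral_norm_smul_sub_smul_sq_le {a b : Ω → ℝ} (ha : MemLp a ⊤ μ) (hb : MemLp b ⊤ μ)
    (U₁ U₂ : Lp E 2 μ)
    (horth : ∫ x, b x ^ 2 * ⟪U₂ x, U₂ x - U₁ x⟫ ∂μ = ∫ x, a x ^ 2 * ⟪U₁ x, U₂ x - U₁ x⟫ ∂μ) :
    ∫ x, ‖b x • U₂ x - a x • U₁ x‖ ^ 2 ∂μ ≤
      (eLpNorm (fun x => b x - a x) ⊤ μ).toReal ^ 2 * (‖U₁‖ * ‖U₂‖) := by
  set M := (eLpNorm (fun x => b x - a x) ⊤ μ).toReal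
  have hδ : MemLp (fun x => b x - a x) ⊤ μ := hb.sub ha
  have hU₁ := Lp.memLp U₁
  have hU₂ := Lp.memLp U₂
  have hW := hU₂.sub hU₁
  calc ∫ x, ‖b x • U₂ x - a x • U₁ x‖ ^ 2 ∂μ
      = ∫ x, (b x ^ 2 * ⟪U₂ x, U₂ x - U₁ x⟫ - a x ^ 2 * ⟪U₁ x, U₂ x - U₁ x⟫)
          + (b x - a x) ^ 2 * ⟪U₁ x, U₂ x⟫ ∂μ := by
        simp only [norm_smul_sub_smul_sq_eq]
    _ = ∫ x, (b x - a x) ^ 2 * ⟪U₁ x, U₂ x⟫ ∂μ := by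
        have hb₂ : Integrable (fun x => b x ^ 2 * ⟪U₂ x, U₂ x - U₁ x⟫) μ :=
          hb.integrable_sq_mul_inner hU₂ hW
        have ha₁ : Integrable (fun x => a x ^ 2 * ⟪U₁ x, U₂ x - U₁ x⟫) μ :=
          ha.integrable_sq_mul_inner hU₁ hW
        rw [integral_add (hb₂.sub' ha₁) (hδ.integrable_sq_mul_inner hU₁ hU₂),
          integral_sub hb₂ ha₁, horth, sub_self, zero_add]
    _ ≤ ∫ x, M ^ 2 * (‖U₁ x‖ * ‖U₂ x‖) ∂μ := by
        refine integral_mono_ae (hδ.integrable_sq_mul_inner hU₁ hU₂)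
          ((hU₁.norm.integrable_mul hU₂.norm).const_mul _) ?_
        filter_upwards [hδ.ae_norm_le_toReal_eLpNorm_top] with x hx
        rw [Real.norm_eq_abs] at hx
        calc (b x - a x) ^ 2 * ⟪U₁ x, U₂ x⟫ ≤ (b x - a x) ^ 2 * (‖U₁ x‖ * ‖U₂ x‖) :=
              mul_le_mul_of_nonneg_left (real_inner_le_norm _ _) (sq_nonneg _)
          _ ≤ M ^ 2 * (‖U₁ x‖ * ‖U₂ x‖) := by
              gcongr ?_ * _
              exact sq_le_sq.mpr (hx.trans (le_abs_self M))
    _ = M ^ 2 * ∫ x, ‖U₁ x‖ * ‖U₂ x‖ ∂μ := integral_const_mul _ _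
    _ ≤ M ^ 2 * (‖U₁‖ * ‖U₂‖) := by gcongr; exact Lp.integral_norm_mul_norm_le U₁ U₂

theorem memLp_top_inv_sqrt {κ : Ω → ℝ} (hκ : AEMeasurable κ μ) {c : ℝ} (hc : 0 < c)
    (hκc : ∀ᵐ x ∂μ, c ≤ κ x) : MemLp (fun x => (√(κ x))⁻¹) ⊤ μ := by
  refine memLp_top_of_bound hκ.sqrt.inv.aestronglyMeasurable (√c)⁻¹ ?_
  filter_upwards [hκc] with x hx
  rw [Real.norm_of_nonneg (by positivity)]
  exact inv_anti₀ (Real.sqrt_pos.2 hc) (Real.sqrt_le_sqrt hx)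

theorem integral_inv_sqrt_sq_mul {κ : Ω → ℝ} (hκ : 0 ≤ᵐ[μ] κ) (g : Ω → ℝ) :
    ∫ x, (√(κ x))⁻¹ ^ 2 * g x ∂μ = ∫ x, (κ x)⁻¹ * g x ∂μ := by
  refine integral_congr_ae ?_
  filter_upwards [hκ] with x hx
  rw [inv_pow, Real.sq_sqrt hx]

end

namespace IsMGSolution

variable {Ω : Type*} [MeasurableSpace Ω] {μ : Measure Ω} {d : ℕ} {S : MixedGalerkinSetup μ d}
  {κ : Ω → ℝ} {f : Lp ℝ 2 μ} {u : S.V} {p : S.Q}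

local notation "L²ᵈ" => Lp (EuclideanSpace ℝ (Fin d)) 2 μ

theorem inner_D_eq (h : IsMGSolution S κ f u p) (q : S.Q) :
    ⟪S.D u, (q : Lp ℝ 2 μ)⟫ = ⟪f, (q : Lp ℝ 2 μ)⟫ := by
  simpa only [L2.real_inner_eq_integral_mul] using h.2 q

theorem integral_inv_mul_inner_eq (h : IsMGSolution S κ f u p) (v : S.V) :
    ∫ x, (κ x)⁻¹ * ⟪(u : L²ᵈ) x, (v : L²ᵈ) x⟫ ∂μ = ⟪S.D v, (p : Lp ℝ 2 μ)⟫ := by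
  rw [L2.real_inner_eq_integral_mul, ← sub_eq_zero]
  exact h.1 v

theorem norm_D_le (h : IsMGSolution S κ f u p) : ‖S.D u‖ ≤ ‖f‖ :=
  norm_le_norm_of_forall_inner_eq S.Q (S.D_mem_Q u) fun q hq => h.inner_D_eq ⟨q, hq⟩

theorem norm_le (h : IsMGSolution S κ f u p) {C : ℝ} (hC : 0 ≤ C)
    (hPoincare : ∀ v : S.V, ‖(v : L²ᵈ)‖ ≤ C * ‖S.D v‖) :
    ‖(u : L²ᵈ)‖ ≤ C * ‖f‖ :=
  (hPoincare u).trans (mul_le_mul_of_nonneg_left h.norm_D_le hC)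

theorem integral_inv_mul_inner_sub_eq {κ₁ κ₂ : Ω → ℝ} {u₁ u₂ : S.V} {p₁ p₂ : S.Q}
    (h₁ : IsMGSolution S κ₁ f u₁ p₁) (h₂ : IsMGSolution S κ₂ f u₂ p₂) :
    ∫ x, (κ₂ x)⁻¹ * ⟪(u₂ : L²ᵈ) x, (u₂ : L²ᵈ) x - (u₁ : L²ᵈ) x⟫ ∂μ
      = ∫ x, (κ₁ x)⁻¹ * ⟪(u₁ : L²ᵈ) x, (u₂ : L²ᵈ) x - (u₁ : L²ᵈ) x⟫ ∂μ := by
  have hw : ∀ᵐ x ∂μ, ((u₂ - u₁ : S.V) : L²ᵈ) x = (u₂ : L²ᵈ) x - (u₁ : L²ᵈ) x :=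
    Lp.coeFn_sub _ _
  have horth : ⟪S.D (u₂ - u₁), ((p₂ - p₁ : S.Q) : Lp ℝ 2 μ)⟫ = 0 := by
    rw [map_sub, inner_sub_left, h₂.inner_D_eq, h₁.inner_D_eq, sub_self]
  calc _ = ⟪S.D (u₂ - u₁), (p₂ : Lp ℝ 2 μ)⟫ := by
        rw [← h₂.integral_inv_mul_inner_eq]
        exact integral_congr_ae (hw.mono fun x hx => by simp only [hx])
    _ = ⟪S.D (u₂ - u₁), (p₁ : Lp ℝ 2 μ)⟫ := by
        rw [← sub_eq_zero, ← inner_sub_right]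
        exact horth
    _ = _ := by
        rw [← h₁.integral_inv_mul_inner_eq]
        exact integral_congr_ae (hw.mono fun x hx => by simp only [hx])

end IsMGSolution

/-- Theorem 4.2, abstract form: under the discrete Poincaré inequality with
constant `C_P > 0`, if `(u₁,p₁)` and `(u₂,p₂)` are mixed Galerkin solutions for `(κ₁,f₂)`
and `(κ₂,f₂)` in the same spaces, then
`‖κ₂^{-1/2} u₂ − κ₁^{-1/2} u₁‖_{L²} ≤ C_P ‖κ₂^{-1/2} − κ₁^{-1/2}‖_{L^∞} ‖f₂‖_{L²}`. -/
theorem stmt6 {Ω : Type*} [MeasurableSpace Ω] {μ : Measure Ω} {d : ℕ}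
    (S : MixedGalerkinSetup μ d) (C_P : ℝ) (hC_P : 0 < C_P)
    (hPoincare : ∀ v : S.V, ‖(v : Lp (EuclideanSpace ℝ (Fin d)) 2 μ)‖ ≤ C_P * ‖S.D v‖)
    (κ₁ κ₂ : Ω → ℝ) (hκ₁ : Measurable κ₁) (hκ₂ : Measurable κ₂)
    (κ₁_min κ₂_min : ℝ) (hκ₁_min : 0 < κ₁_min) (hκ₂_min : 0 < κ₂_min)
    (hκ₁_ae : ∀ᵐ x ∂μ, κ₁_min ≤ κ₁ x) (hκ₂_ae : ∀ᵐ x ∂μ, κ₂_min ≤ κ₂ x)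
    (f₂ : Lp ℝ 2 μ) (u₁ : S.V) (p₁ : S.Q) (u₂ : S.V) (p₂ : S.Q)
    (hsol₁ : IsMGSolution S κ₁ f₂ u₁ p₁) (hsol₂ : IsMGSolution S κ₂ f₂ u₂ p₂) :
    Real.sqrt (∫ x, ‖(Real.sqrt (κ₂ x))⁻¹ • (u₂ : Lp (EuclideanSpace ℝ (Fin d)) 2 μ) x
        - (Real.sqrt (κ₁ x))⁻¹ • (u₁ : Lp (EuclideanSpace ℝ (Fin d)) 2 μ) x‖ ^ 2 ∂μ)
      ≤ C_P * (eLpNorm (fun x => (Real.sqrt (κ₂ x))⁻¹ - (Real.sqrt (κ₁ x))⁻¹) ⊤ μ).toReal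
          * ‖f₂‖ := by
  set M := (eLpNorm (fun x => (Real.sqrt (κ₂ x))⁻¹ - (Real.sqrt (κ₁ x))⁻¹) ⊤ μ).toReal
  have horth := hsol₁.integral_inv_mul_inner_sub_eq hsol₂
  rw [← integral_inv_sqrt_sq_mul (hκ₁_ae.mono fun x hx => hκ₁_min.le.trans hx),
    ← integral_inv_sqrt_sq_mul (hκ₂_ae.mono fun x hx => hκ₂_min.le.trans hx)] at horth
  have hu₁ := hsol₁.norm_le hC_P.le hPoincare
  have hu₂ := hsol₂.norm_le hC_P.le hPoincare
  rw [Real.sqrt_le_left (by positivity)]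
  calc _ ≤ M ^ 2 * (‖(u₁ : Lp (EuclideanSpace ℝ (Fin d)) 2 μ)‖
          * ‖(u₂ : Lp (EuclideanSpace ℝ (Fin d)) 2 μ)‖) :=
        integral_norm_smul_sub_smul_sq_le (memLp_top_inv_sqrt hκ₁.aemeasurable hκ₁_min hκ₁_ae)
          (memLp_top_inv_sqrt hκ₂.aemeasurable hκ₂_min hκ₂_ae) _ _ horth
    _ ≤ M ^ 2 * ((C_P * ‖f₂‖) * (C_P * ‖f₂‖)) := by gcongr
    _ = (C_P * M * ‖f₂‖) ^ 2 := by ring
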